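/- arXiv:1812.10513 — 3 statements merged into one kernel-verified Lean document; each statement's English description precedes it below -/
import Mathlib

section
/- There exists a summable sequence (M_n)_{n≥1} of nonnegative real numbers such that for every n ≥ 1 and every x ∈ [−π, 2π]: | cos(ρ_n x)/α_n − (2/π) cos(nx) + (2ωx/(π² n)) sin(nx) | ≤ M_n. Consequently, the series Σ_{n=1}^∞ ( cos(ρ_n x)/α_n − (2/π) cos(nx) + (2ωx/(π² n)) sin(nx) ) converges absolutely and uniformly on [−π, 2π], and its sum is a continuous function of x on [−π, 2π]. -/
open Real Filter Topology

/-!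
With `ε_n = ω/(πn) + k_n/n` we have `ρ_n x = nx + ε_n x`, and the second-order expansion
`cos (a + h) = cos a - h sin a + O(h²)` at `a = nx`, `h = ε_n x` turns the `ω`-part of
`-h sin (nx)` into exactly the correction term `-(2ωx/(π²n)) sin (nx)`. What is left is bounded
on `[-π, 2π]` by `|1/α_n - 2/π| + O(ε_n²) + O(|k_n|/n)`: the first term is `O(|K_n|/n)`, and
`|k_n|/n`, `|K_n|/n` are summable by AM-GM against `1/n ∈ ℓ²`. The Weierstrass M-test does the
rest.
-/

lemma abs_sub_sin_le_two_mul_sq (x : ℝ) : |x - sin x| ≤ 2 * x ^ 2 := by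
  rcases le_total |x| 1 with hx | hx
  · calc |x - sin x| ≤ |x| ^ 3 / 6 := abs_sub_sin_le x
      _ ≤ 2 * x ^ 2 := by nlinarith [abs_nonneg x, sq_abs x]
  · calc |x - sin x| ≤ |x| + |sin x| := abs_sub _ _
      _ ≤ 2 * |x| := by linarith [abs_sin_le_abs (x := x)]
      _ ≤ 2 * x ^ 2 := by nlinarith [sq_abs x]

lemma abs_cos_sub_one_le (x : ℝ) : |cos x - 1| ≤ x ^ 2 / 2 :=
  abs_le.2 ⟨by linarith [one_sub_sq_div_two_le_cos (x := x)], by nlinarith [cos_le_one x]⟩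

lemma abs_cos_add_sub_cos_add_mul_sin_le (a h : ℝ) :
    |cos (a + h) - cos a + h * sin a| ≤ 3 * h ^ 2 := by
  have hsplit : cos (a + h) - cos a + h * sin a = cos a * (cos h - 1) + sin a * (h - sin h) := by
    rw [cos_add]; ring
  rw [hsplit]
  calc |cos a * (cos h - 1) + sin a * (h - sin h)|
      ≤ |cos a| * |cos h - 1| + |sin a| * |h - sin h| := by
        simpa only [abs_mul] using abs_add_le (cos a * (cos h - 1)) (sin a * (h - sin h))
    _ ≤ 1 * (h ^ 2 / 2) + 1 * (2 * h ^ 2) := by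
        gcongr
        exacts [abs_cos_le_one a, abs_cos_sub_one_le h, abs_sin_le_one a,
          abs_sub_sin_le_two_mul_sq h]
    _ ≤ 3 * h ^ 2 := by nlinarith [sq_nonneg h]

lemma abs_cos_add_div_sub_le (a h b α c : ℝ) :
    |cos (a + h) / α - c * cos a + c * (h - b) * sin a| ≤
      |α⁻¹ - c| + 3 * |c| * h ^ 2 + |c| * |b| := by
  have hsplit : cos (a + h) / α - c * cos a + c * (h - b) * sin a =
      cos (a + h) * (α⁻¹ - c) + c * (cos (a + h) - cos a + h * sin a) - c * b * sin a := by
    ring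
  rw [hsplit]
  have h₁ : |cos (a + h) * (α⁻¹ - c)| ≤ |α⁻¹ - c| := by
    rw [abs_mul]; exact mul_le_of_le_one_left (abs_nonneg _) (abs_cos_le_one _)
  have h₂ : |c * (cos (a + h) - cos a + h * sin a)| ≤ 3 * |c| * h ^ 2 := by
    rw [abs_mul]
    calc |c| * |cos (a + h) - cos a + h * sin a| ≤ |c| * (3 * h ^ 2) := by
          gcongr; exact abs_cos_add_sub_cos_add_mul_sin_le a h
      _ = 3 * |c| * h ^ 2 := by ring
  have h₃ : |c * b * sin a| ≤ |c| * |b| := by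
    rw [abs_mul, abs_mul]; exact mul_le_of_le_one_right (by positivity) (abs_sin_le_one a)
  calc _ ≤ |cos (a + h) * (α⁻¹ - c)| + |c * (cos (a + h) - cos a + h * sin a)| +
          |c * b * sin a| := (abs_sub _ _).trans (add_le_add_left (abs_add_le _ _) _)
    _ ≤ _ := add_le_add (add_le_add h₁ h₂) h₃

lemma Summable.sq_add {ι : Type*} {u v : ι → ℝ} (hu : Summable fun i => u i ^ 2)
    (hv : Summable fun i => v i ^ 2) : Summable fun i => (u i + v i) ^ 2 :=
  ((hu.add hv).mul_left 2).of_nonneg_of_le (fun _ => sq_nonneg _)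
    fun i => by nlinarith [sq_nonneg (u i - v i)]

lemma Summable.inv_sub_inv {ι : Type*} {α : ι → ℝ} {c : ℝ} (hc : c ≠ 0)
    (h : Summable fun i => α i - c) : Summable fun i => (α i)⁻¹ - c⁻¹ := by
  have hc' : 0 < |c| := abs_pos.2 hc
  have hlim : Tendsto α cofinite (𝓝 c) := by
    simpa using h.tendsto_cofinite_zero.add_const c
  have hfar : ∀ᶠ i in cofinite, |c| / 2 < |α i| :=
    (continuous_abs.tendsto c).comp hlim |>.eventually (lt_mem_nhds (by linarith))
  refine (h.abs.mul_left (2 / |c| ^ 2)).of_norm_bounded_eventually ?_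
  filter_upwards [hfar] with i hi
  have hαi : α i ≠ 0 := abs_pos.1 (by linarith)
  rw [Real.norm_eq_abs, _root_.inv_sub_inv hαi hc, abs_div, abs_mul, abs_sub_comm,
    div_le_iff₀ (by positivity)]
  calc |α i - c| = 2 / |c| ^ 2 * |α i - c| * (|c| / 2 * |c|) := by field_simp
    _ ≤ 2 / |c| ^ 2 * |α i - c| * (|α i| * |c|) := by gcongr

lemma summable_abs_div_natCast {k : ℕ → ℝ} (hk : Summable fun n => k n ^ 2) :
    Summable fun n : ℕ => |k n| / n := by
  have hinv : Summable fun n : ℕ => (1 / (n : ℝ)) ^ 2 := by simp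
  refine ((hk.add hinv).div_const 2).of_nonneg_of_le (fun n => by positivity) fun n => ?_
  rw [div_eq_mul_one_div]
  nlinarith [sq_nonneg (|k n| - 1 / (n : ℝ)), sq_abs (k n)]

lemma summable_div_natCast_sq {k : ℕ → ℝ} (hk : Summable fun n => k n ^ 2) :
    Summable fun n : ℕ => (k n / n) ^ 2 := by
  refine hk.of_nonneg_of_le (fun _ => sq_nonneg _) fun n => ?_
  rcases Nat.eq_zero_or_pos n with rfl | hn
  · simpa using sq_nonneg (k 0)
  · rw [div_pow]
    exact div_le_self (sq_nonneg _) (one_le_pow₀ (by exact_mod_cast hn))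

lemma abs_cos_mul_div_sub_le {ω ρ α κ x : ℝ} {n : ℕ} (hρ : ρ = n + ω / (π * n) + κ / n)
    (hx : |x| ≤ 2 * π) :
    |cos (ρ * x) / α - (2 / π) * cos (n * x) + (2 * ω * x / (π ^ 2 * n)) * sin (n * x)| ≤
      |α⁻¹ - 2 / π| + 24 * π * (ω / (π * n) + κ / n) ^ 2 + 4 * (|κ| / n) := by
  have hform :
      cos (ρ * x) / α - (2 / π) * cos (n * x) + (2 * ω * x / (π ^ 2 * n)) * sin (n * x) =
        cos (n * x + (ω / (π * n) + κ / n) * x) / α - (2 / π) * cos (n * x) +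
        (2 / π) * ((ω / (π * n) + κ / n) * x - κ * x / n) * sin (n * x) := by
    rw [hρ]; ring_nf
  rw [hform]
  set ε := ω / (π * n) + κ / n
  refine (abs_cos_add_div_sub_le _ _ _ α _).trans ?_
  have hεx : (ε * x) ^ 2 ≤ (2 * π) ^ 2 * ε ^ 2 := by
    rw [mul_pow, mul_comm, ← sq_abs x]; gcongr
  have hκx : |κ * x / n| ≤ 2 * π * (|κ| / n) := by
    rw [abs_div, abs_mul, Nat.abs_cast, mul_div_right_comm, mul_comm]; gcongr
  rw [abs_of_pos (by positivity : (0 : ℝ) < 2 / π)]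
  calc |α⁻¹ - 2 / π| + 3 * (2 / π) * (ε * x) ^ 2 + 2 / π * |κ * x / n|
      ≤ |α⁻¹ - 2 / π| + 3 * (2 / π) * ((2 * π) ^ 2 * ε ^ 2) +
          2 / π * (2 * π * (|κ| / n)) := by gcongr
    _ = |α⁻¹ - 2 / π| + 24 * π * ε ^ 2 + 4 * (|κ| / n) := by field_simp; ring

theorem stmt_7_general (ω : ℝ) (ρ α : ℕ → ℝ)
    (k K : ℕ → ℝ) (hk : Summable (fun n => (k n) ^ 2)) (hK : Summable (fun n => (K n) ^ 2))
    (hρa : ∀ n : ℕ, 1 ≤ n → ρ n = n + ω / (π * n) + k n / n)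
    (hαa : ∀ n : ℕ, 1 ≤ n → α n = π / 2 + K n / n) :
    (∃ M : ℕ → ℝ, (∀ n, 0 ≤ M n) ∧ Summable M ∧
      ∀ n : ℕ, 1 ≤ n → ∀ x ∈ Set.Icc (-π) (2 * π),
        |cos (ρ n * x) / α n - (2 / π) * cos (n * x) +
          (2 * ω * x / (π ^ 2 * n)) * sin (n * x)| ≤ M n) ∧
    (∀ x ∈ Set.Icc (-π) (2 * π),
      Summable (fun n : ℕ =>
        |cos (ρ (n + 1) * x) / α (n + 1) - (2 / π) * cos (((n : ℝ) + 1) * x) +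
          (2 * ω * x / (π ^ 2 * ((n : ℝ) + 1))) * sin (((n : ℝ) + 1) * x)|)) ∧
    TendstoUniformlyOn
      (fun (N : ℕ) (x : ℝ) => ∑ n ∈ Finset.range N,
        (cos (ρ (n + 1) * x) / α (n + 1) - (2 / π) * cos (((n : ℝ) + 1) * x) +
          (2 * ω * x / (π ^ 2 * ((n : ℝ) + 1))) * sin (((n : ℝ) + 1) * x)))
      (fun x : ℝ => ∑' n : ℕ,
        (cos (ρ (n + 1) * x) / α (n + 1) - (2 / π) * cos (((n : ℝ) + 1) * x) +
          (2 * ω * x / (π ^ 2 * ((n : ℝ) + 1))) * sin (((n : ℝ) + 1) * x)))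
      atTop (Set.Icc (-π) (2 * π)) ∧
    ContinuousOn
      (fun x : ℝ => ∑' n : ℕ,
        (cos (ρ (n + 1) * x) / α (n + 1) - (2 / π) * cos (((n : ℝ) + 1) * x) +
          (2 * ω * x / (π ^ 2 * ((n : ℝ) + 1))) * sin (((n : ℝ) + 1) * x)))
      (Set.Icc (-π) (2 * π)) := by
  set M : ℕ → ℝ := fun n =>
    |(α n)⁻¹ - 2 / π| + 24 * π * (ω / (π * n) + k n / n) ^ 2 + 4 * (|k n| / n)
  have hα : Summable fun n => α n - π / 2 :=
    (summable_abs_div_natCast hK).of_norm_bounded_eventually_nat <|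
      eventually_atTop.2 ⟨1, fun n hn => by simp [hαa n hn]⟩
  have hω : Summable fun n : ℕ => (ω / (π * n)) ^ 2 :=
    ((Real.summable_one_div_nat_pow.2 one_lt_two).mul_left ((ω / π) ^ 2)).congr fun n => by ring
  have hM : Summable M := by
    have hαinv : Summable fun n => |(α n)⁻¹ - 2 / π| := by
      simpa only [inv_div] using (hα.inv_sub_inv (by positivity)).abs
    exact (hαinv.add ((hω.sq_add (summable_div_natCast_sq hk)).mul_left (24 * π))).add
      ((summable_abs_div_natCast hk).mul_left 4)
  have hbound : ∀ n, 1 ≤ n → ∀ x ∈ Set.Icc (-π) (2 * π),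
      |cos (ρ n * x) / α n - (2 / π) * cos (n * x) +
        (2 * ω * x / (π ^ 2 * n)) * sin (n * x)| ≤ M n := fun n hn x hx =>
    abs_cos_mul_div_sub_le (hρa n hn) (abs_le.2 ⟨by linarith [hx.1, pi_pos], hx.2⟩)
  have hbound_succ : ∀ n x, x ∈ Set.Icc (-π) (2 * π) →
      ‖cos (ρ (n + 1) * x) / α (n + 1) - (2 / π) * cos (((n : ℝ) + 1) * x) +
        (2 * ω * x / (π ^ 2 * ((n : ℝ) + 1))) * sin (((n : ℝ) + 1) * x)‖ ≤ M (n + 1) := by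
    intro n x hx
    simpa using hbound (n + 1) n.succ_pos x hx
  have hM' : Summable fun n => M (n + 1) := (summable_nat_add_iff 1).2 hM
  exact ⟨⟨M, fun n => by positivity, hM, hbound⟩,
    fun x hx => hM'.of_nonneg_of_le (fun _ => abs_nonneg _) fun n => hbound_succ n x hx,
    tendstoUniformlyOn_tsum_nat hM' hbound_succ,
    continuousOn_tsum (fun n => by fun_prop) hM' hbound_succ⟩

/-- Under the asymptotics ρ_n = n + ω/(πn) + k_n/n, α_n = π/2 + K_n/n with
(k_n), (K_n) ∈ ℓ², there exists a summable sequence (M_n)_{n≥1} of nonnegative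
numbers dominating |cos(ρ_n x)/α_n − (2/π)cos(nx) + (2ωx/(π²n))sin(nx)| on
[−π, 2π]; consequently the corresponding series converges absolutely and
uniformly on [−π, 2π], and its sum is continuous there. -/
theorem stmt_7 (ω : ℝ) (ρ α : ℕ → ℝ)
    (hρ : ∀ n : ℕ, 1 ≤ n → 0 < ρ n) (hα : ∀ n : ℕ, 1 ≤ n → 0 < α n)
    (k K : ℕ → ℝ) (hk : Summable (fun n => (k n) ^ 2)) (hK : Summable (fun n => (K n) ^ 2))
    (hρa : ∀ n : ℕ, 1 ≤ n → ρ n = n + ω / (π * n) + k n / n)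
    (hαa : ∀ n : ℕ, 1 ≤ n → α n = π / 2 + K n / n) :
    (∃ M : ℕ → ℝ, (∀ n, 0 ≤ M n) ∧ Summable M ∧
      ∀ n : ℕ, 1 ≤ n → ∀ x ∈ Set.Icc (-π) (2 * π),
        |cos (ρ n * x) / α n - (2 / π) * cos (n * x) +
          (2 * ω * x / (π ^ 2 * n)) * sin (n * x)| ≤ M n) ∧
    (∀ x ∈ Set.Icc (-π) (2 * π),
      Summable (fun n : ℕ =>
        |cos (ρ (n + 1) * x) / α (n + 1) - (2 / π) * cos (((n : ℝ) + 1) * x) +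
          (2 * ω * x / (π ^ 2 * ((n : ℝ) + 1))) * sin (((n : ℝ) + 1) * x)|)) ∧
    TendstoUniformlyOn
      (fun (N : ℕ) (x : ℝ) => ∑ n ∈ Finset.range N,
        (cos (ρ (n + 1) * x) / α (n + 1) - (2 / π) * cos (((n : ℝ) + 1) * x) +
          (2 * ω * x / (π ^ 2 * ((n : ℝ) + 1))) * sin (((n : ℝ) + 1) * x)))
      (fun x : ℝ => ∑' n : ℕ,
        (cos (ρ (n + 1) * x) / α (n + 1) - (2 / π) * cos (((n : ℝ) + 1) * x) +
          (2 * ω * x / (π ^ 2 * ((n : ℝ) + 1))) * sin (((n : ℝ) + 1) * x)))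
      atTop (Set.Icc (-π) (2 * π)) ∧
    ContinuousOn
      (fun x : ℝ => ∑' n : ℕ,
        (cos (ρ (n + 1) * x) / α (n + 1) - (2 / π) * cos (((n : ℝ) + 1) * x) +
          (2 * ω * x / (π ^ 2 * ((n : ℝ) + 1))) * sin (((n : ℝ) + 1) * x)))
      (Set.Icc (-π) (2 * π)) :=
  stmt_7_general ω ρ α k K hk hK hρa hαa
end

section
/- The series Σ_{n=0}^∞ sup_{x,t ∈ [0,π]} | cos(ρ_n x)( c(ρ_n,t) − cos(ρ_n t) )/α_n − cos(nx)( c(n,t) − cos(nt) )/α_n^0 | converges; that is, the terms Δ_n(x,t) = ( cos(ρ_n x) c(ρ_n,t)/α_n − cos(nx) c(n,t)/α_n^0 ) − ( cos(ρ_n x) cos(ρ_n t)/α_n − cos(nx) cos(nt)/α_n^0 ) form an absolutely and uniformly convergent series of continuous functions on [0,π] × [0,π]. -/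
open Real Filter Topology Set

/-!
For large `ρ`, the remainder `c(ρ,·) - cos(ρ·)` solves the oscillator equation
`v'' = -ρ² v + q c` with zero initial value, and rotating the phase point `(ρ v, v')` by `e^{iρt}`
shows that a forced oscillator moves by at most (forcing) × (time); hence the remainder is
`O(1/ρ)`. The difference of the remainders at `ρ_n` and at `n` solves the same kind of equation
with forcing `q (c(ρ_n,·) - c(n,·)) - (ρ_n² - n²)(c(ρ_n,·) - cos(ρ_n·)) = O(1/n)`, because
`ρ_n - n = O(1/n)`, so it is `O(1/n²)`. Together with `cos(ρ_n x) - cos(n x) = O(1/n)` and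
`1/α_n - 2/π = O(1/n)` this makes `Δ_n = O(1/n²)` uniformly on `[0,π]²`, and the Weierstrass
M-test does the rest.
-/

theorem mul_abs_le_of_forced_oscillator {a b σ G : ℝ} {u u' g : ℝ → ℝ} (hσ : 0 ≤ σ)
    (hu : ∀ t ∈ Icc a b, HasDerivWithinAt u (u' t) (Icc a b) t)
    (hu' : ∀ t ∈ Icc a b, HasDerivWithinAt u' (-σ ^ 2 * u t + g t) (Icc a b) t)
    (hg : ∀ t ∈ Icc a b, |g t| ≤ G) {t : ℝ} (ht : t ∈ Icc a b) :
    σ * |u t| ≤ σ * |u a| + |u' a| + G * (t - a) := by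
  -- `e^{iσt} (σ u + i u')` is constant for the free oscillator, so only the forcing `g` moves it
  set F : ℝ → ℂ := fun t => Complex.exp (σ * t * Complex.I) * (σ * u t + u' t * Complex.I)
  have hunit : ∀ s : ℝ, ‖Complex.exp (σ * s * Complex.I)‖ = 1 := fun s => by
    rw [← Complex.ofReal_mul]; exact Complex.norm_exp_ofReal_mul_I _
  have hF : ∀ s ∈ Icc a b, HasDerivWithinAt F
      (Complex.exp (σ * s * Complex.I) * (g s * Complex.I)) (Icc a b) s := by
    intro s hs
    have hexp : HasDerivAt (fun s : ℝ => Complex.exp (σ * s * Complex.I))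
        (Complex.exp (σ * s * Complex.I) * (σ * Complex.I)) s := by
      simpa using
        (((hasDerivAt_id (s : ℂ)).const_mul (σ : ℂ)).mul_const Complex.I).cexp.comp_ofReal
    have hphase : HasDerivWithinAt (fun s => (σ * u s : ℂ) + u' s * Complex.I)
        (σ * u' s + ((-σ ^ 2 * u s + g s : ℝ) : ℂ) * Complex.I) (Icc a b) s :=
      ((hu s hs).ofReal_comp.const_mul (σ : ℂ)).add ((hu' s hs).ofReal_comp.mul_const Complex.I)
    refine (hexp.hasDerivWithinAt.mul hphase).congr_deriv ?_
    push_cast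
    linear_combination Complex.exp (σ * s * Complex.I) * σ * u' s * Complex.I_sq
  have hnorm : ∀ s, ‖F s‖ = ‖(σ * u s : ℂ) + u' s * Complex.I‖ := fun s => by
    rw [norm_mul, hunit, one_mul]
  have hmove : ‖F t - F a‖ ≤ G * (t - a) := by
    have := (convex_Icc a b).norm_image_sub_le_of_norm_hasDerivWithin_le hF
      (fun s hs => by simpa [hunit] using hg s hs) (left_mem_Icc.2 (ht.1.trans ht.2)) ht
    rwa [Real.norm_eq_abs, abs_of_nonneg (sub_nonneg.2 ht.1)] at this
  calc σ * |u t| = |((σ * u t : ℂ) + u' t * Complex.I).re| := by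
        simp [abs_mul, abs_of_nonneg hσ]
    _ ≤ ‖F t‖ := (hnorm t).symm ▸ Complex.abs_re_le_norm _
    _ ≤ ‖F a‖ + ‖F t - F a‖ := norm_le_insert' _ _
    _ ≤ σ * |u a| + |u' a| + G * (t - a) := by
      grw [hmove, hnorm, norm_add_le]
      simp [abs_of_nonneg hσ]

theorem abs_cos_mul_sub_cos_mul_le (r s x : ℝ) :
    |cos (r * x) - cos (s * x)| ≤ |r - s| * |x| := by
  simpa [← sub_mul, abs_mul] using abs_cos_sub_cos_le (r * x) (s * x)

structure IsCauchySolution (q : ℝ → ℝ) (h ρ : ℝ) (u u' : ℝ → ℝ) : Prop where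
  apply_zero : u 0 = 1
  deriv_zero : u' 0 = h
  hasDerivWithinAt : ∀ x ∈ Icc 0 π, HasDerivWithinAt u (u' x) (Icc 0 π) x
  hasDerivWithinAt_deriv :
    ∀ x ∈ Icc 0 π, HasDerivWithinAt u' (q x * u x - ρ ^ 2 * u x) (Icc 0 π) x

namespace IsCauchySolution

variable {q u u' v v' : ℝ → ℝ} {h ρ r s Q : ℝ}

theorem continuousOn (hu : IsCauchySolution q h ρ u u') : ContinuousOn u (Icc 0 π) :=
  fun x hx => (hu.hasDerivWithinAt x hx).continuousWithinAt

theorem continuousOn_cos_mul_mul_sub_cos (hu : IsCauchySolution q h ρ u u') :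
    ContinuousOn (fun p : ℝ × ℝ => cos (ρ * p.1) * (u p.2 - cos (ρ * p.2)))
      (Icc 0 π ×ˢ Icc 0 π) :=
  (continuous_cos.comp (continuous_const.mul continuous_fst)).continuousOn.mul
    ((hu.continuousOn.comp continuousOn_snd fun _ hp => hp.2).sub (by fun_prop))

theorem hasDerivWithinAt_sub_cos (hu : IsCauchySolution q h ρ u u') {x : ℝ}
    (hx : x ∈ Icc 0 π) :
    HasDerivWithinAt (fun t => u t - cos (ρ * t)) (u' x + ρ * sin (ρ * x)) (Icc 0 π) x := by
  have := (hu.hasDerivWithinAt x hx).sub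
    (((hasDerivAt_id x).const_mul ρ).cos.hasDerivWithinAt)
  exact this.congr_deriv (by simp; ring)

theorem hasDerivWithinAt_deriv_add_sin (hu : IsCauchySolution q h ρ u u') {x : ℝ}
    (hx : x ∈ Icc 0 π) :
    HasDerivWithinAt (fun t => u' t + ρ * sin (ρ * t))
      (-ρ ^ 2 * (u x - cos (ρ * x)) + q x * u x) (Icc 0 π) x := by
  have := (hu.hasDerivWithinAt_deriv x hx).add
    ((((hasDerivAt_id x).const_mul ρ).sin.const_mul ρ).hasDerivWithinAt)
  exact this.congr_deriv (by simp; ring)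

theorem mul_abs_sub_cos_le (hu : IsCauchySolution q h ρ u u')
    (hq : ∀ t ∈ Icc 0 π, |q t| ≤ Q) {M : ℝ} (hM : ∀ t ∈ Icc 0 π, |u t| ≤ M) (hρ : 0 ≤ ρ)
    {t : ℝ} (ht : t ∈ Icc 0 π) :
    ρ * |u t - cos (ρ * t)| ≤ |h| + π * Q * M := by
  have hg : ∀ s ∈ Icc 0 π, |q s * u s| ≤ Q * M := fun s hs => by
    rw [abs_mul]
    exact mul_le_mul (hq s hs) (hM s hs) (abs_nonneg _) ((abs_nonneg _).trans (hq s hs))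
  have := mul_abs_le_of_forced_oscillator hρ (fun x hx => hu.hasDerivWithinAt_sub_cos hx)
    (fun x hx => hu.hasDerivWithinAt_deriv_add_sin hx) hg ht
  have hQM : 0 ≤ Q * M := (abs_nonneg _).trans (hg 0 (left_mem_Icc.2 pi_pos.le))
  simp only [hu.apply_zero, hu.deriv_zero, mul_zero, cos_zero, sin_zero, sub_self, abs_zero,
    add_zero, zero_add, sub_zero] at this
  nlinarith [ht.2]

theorem abs_le (hu : IsCauchySolution q h ρ u u') (hq : ∀ t ∈ Icc 0 π, |q t| ≤ Q)
    (hρ : 1 ≤ ρ) (hρQ : 2 * π * Q ≤ ρ) {t : ℝ} (ht : t ∈ Icc 0 π) : |u t| ≤ 2 + 2 * |h| := by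
  obtain ⟨t₀, ht₀, hmax⟩ := isCompact_Icc.exists_isMaxOn (nonempty_Icc.2 pi_pos.le)
    hu.continuousOn.abs
  have hg : ∀ s ∈ Icc 0 π, |q s * u s| ≤ Q * |u t₀| := fun s hs => by
    rw [abs_mul]
    exact mul_le_mul (hq s hs) (hmax hs) (abs_nonneg _) ((abs_nonneg _).trans (hq s hs))
  have := mul_abs_le_of_forced_oscillator (zero_le_one.trans hρ) hu.hasDerivWithinAt
    (fun x hx => (hu.hasDerivWithinAt_deriv x hx).congr_deriv (by ring)) hg ht₀
  rw [hu.apply_zero, hu.deriv_zero, abs_one, sub_zero] at this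
  have hQ : 0 ≤ Q := (abs_nonneg _).trans (hq 0 (left_mem_Icc.2 pi_pos.le))
  -- at a maximum point of `|u|`, the forcing term is at most half of `ρ |u t₀|`
  have hforce : Q * |u t₀| * t₀ ≤ ρ * |u t₀| / 2 := by
    calc Q * |u t₀| * t₀ ≤ Q * |u t₀| * π := by gcongr; exact ht₀.2
      _ ≤ ρ * |u t₀| / 2 := by nlinarith [abs_nonneg (u t₀)]
  have : ρ * |u t₀| ≤ 2 * ρ + 2 * |h| := by linarith
  exact (hmax ht).trans (by nlinarith [abs_nonneg h])

theorem sq_mul_abs_sub_cos_sub_sub_cos_le (hu : IsCauchySolution q h r u u')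
    (hv : IsCauchySolution q h s v v') (hq : ∀ t ∈ Icc 0 π, |q t| ≤ Q) {C D : ℝ} (hs : 0 < s)
    (hr : 0 ≤ r) (hrs2 : r ≤ 2 * s) (hrs : |r - s| ≤ D / s)
    (hU : ∀ t ∈ Icc 0 π, |u t - cos (r * t)| ≤ C / s)
    (hV : ∀ t ∈ Icc 0 π, |v t - cos (s * t)| ≤ C / s) {t : ℝ} (ht : t ∈ Icc 0 π) :
    s ^ 2 * |u t - cos (r * t) - (v t - cos (s * t))| ≤
      π * (Q * (2 * C + π * D) + 3 * D * C) := by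
  have h0 : (0 : ℝ) ∈ Icc 0 π := left_mem_Icc.2 pi_pos.le
  have hQ : 0 ≤ Q := (abs_nonneg _).trans (hq 0 h0)
  have hC : 0 ≤ C := by
    have := mul_nonneg ((abs_nonneg _).trans (hU 0 h0)) hs.le
    rwa [div_mul_cancel₀ _ hs.ne'] at this
  have hD : 0 ≤ D := by
    have := mul_nonneg ((abs_nonneg _).trans hrs) hs.le
    rwa [div_mul_cancel₀ _ hs.ne'] at this
  have hcos : ∀ t ∈ Icc 0 π, |cos (r * t) - cos (s * t)| ≤ π * D / s := fun t ht => by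
    grw [abs_cos_mul_sub_cos_mul_le, hrs, abs_of_nonneg ht.1, ht.2]
    exact le_of_eq (by ring)
  have huv : ∀ t ∈ Icc 0 π, |u t - v t| ≤ (2 * C + π * D) / s := fun t ht => by
    calc |u t - v t|
        = |(u t - cos (r * t)) - (v t - cos (s * t)) + (cos (r * t) - cos (s * t))| := by
          ring_nf
      _ ≤ C / s + C / s + π * D / s := by
          grw [abs_add_le, abs_sub, hU t ht, hV t ht, hcos t ht]
      _ = (2 * C + π * D) / s := by ring
  have hsq : |r ^ 2 - s ^ 2| ≤ 3 * D := by
    calc |r ^ 2 - s ^ 2| = |r - s| * (r + s) := by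
          rw [← abs_of_nonneg (by linarith : 0 ≤ r + s), ← abs_mul]; ring_nf
      _ ≤ D / s * (3 * s) := mul_le_mul hrs (by linarith) (by positivity) (by positivity)
      _ = 3 * D := by field_simp
  -- the difference `w` solves `w'' = -s² w + q (u - v) - (r² - s²) (u - cos (r ·))`,
  -- `w(0) = w'(0) = 0`
  have hg : ∀ t ∈ Icc 0 π, |q t * (u t - v t) - (r ^ 2 - s ^ 2) * (u t - cos (r * t))| ≤
      (Q * (2 * C + π * D) + 3 * D * C) / s := fun t ht => by
    calc _ ≤ |q t| * |u t - v t| + |r ^ 2 - s ^ 2| * |u t - cos (r * t)| := by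
          grw [abs_sub, abs_mul, abs_mul]
      _ ≤ Q * ((2 * C + π * D) / s) + 3 * D * (C / s) := by
          grw [hq t ht, huv t ht, hsq, hU t ht]
      _ = _ := by ring
  have := mul_abs_le_of_forced_oscillator
    (u := fun t => u t - cos (r * t) - (v t - cos (s * t))) hs.le
    (fun x hx => (hu.hasDerivWithinAt_sub_cos hx).sub (hv.hasDerivWithinAt_sub_cos hx))
    (fun x hx => ((hu.hasDerivWithinAt_deriv_add_sin hx).sub
      (hv.hasDerivWithinAt_deriv_add_sin hx)).congr_deriv (by ring)) hg ht
  simp only [hu.apply_zero, hu.deriv_zero, hv.apply_zero, hv.deriv_zero, mul_zero, cos_zero,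
    sin_zero, sub_self, abs_zero, add_zero, zero_add, sub_zero] at this
  calc _ = s * (s * |u t - cos (r * t) - (v t - cos (s * t))|) := by ring
    _ ≤ s * ((Q * (2 * C + π * D) + 3 * D * C) / s * π) :=
        mul_le_mul_of_nonneg_left (this.trans (by gcongr; exact ht.2)) hs.le
    _ = _ := by field_simp

end IsCauchySolution

theorem abs_mul_div_sub_mul_div_le {a a' U V α s C D E : ℝ} (hs : 2 ≤ s)
    (ha : |a - a'| ≤ π * D / s) (ha' : |a'| ≤ 1) (hU : |U| ≤ C / s) (hV : |V| ≤ C / s)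
    (hUV : s ^ 2 * |U - V| ≤ E) (hα : |α - π / 2| ≤ 1 / s) :
    |a * U / α - a' * V / (π / 2)| ≤ (4 * D * C + 4 * E / π + 8 * C / π ^ 2) / s ^ 2 := by
  have hs0 : 0 < s := by linarith
  have hα4 : π / 4 ≤ α := by
    have : 1 / s ≤ 1 / 2 := by gcongr
    linarith [(abs_le.1 hα).1, pi_gt_three]
  have hα0 : 0 < α := by linarith [pi_pos]
  have hU0 : 0 ≤ C / s := (abs_nonneg _).trans hU
  have hUV' : |U - V| ≤ E / s ^ 2 := by rw [le_div_iff₀ (by positivity)]; linarith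
  have h1 : |(a - a') * U / α| ≤ π * D / s * (C / s) / (π / 4) := by
    rw [abs_div, abs_mul, abs_of_pos hα0]
    exact div_le_div₀ (mul_nonneg ((abs_nonneg _).trans ha) hU0)
      (mul_le_mul ha hU (abs_nonneg _) ((abs_nonneg _).trans ha)) (by positivity) hα4
  have h2 : |a' * (U - V) / α| ≤ 1 * (E / s ^ 2) / (π / 4) := by
    rw [abs_div, abs_mul, abs_of_pos hα0]
    exact div_le_div₀ (by linarith [(abs_nonneg _).trans hUV'])
      (mul_le_mul ha' hUV' (abs_nonneg _) zero_le_one) (by positivity) hα4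
  have h3 : |a' * V * (π / 2 - α) / (α * (π / 2))| ≤
      1 * (C / s) * (1 / s) / (π / 4 * (π / 2)) := by
    rw [abs_div, abs_mul, abs_mul, abs_of_pos (by positivity : 0 < α * (π / 2)), abs_sub_comm]
    exact div_le_div₀ (by positivity)
      (mul_le_mul (mul_le_mul ha' hV (abs_nonneg _) zero_le_one) hα (abs_nonneg _)
        (by positivity))
      (by positivity) (by gcongr)
  calc |a * U / α - a' * V / (π / 2)|
      = |(a - a') * U / α + a' * (U - V) / α + a' * V * (π / 2 - α) / (α * (π / 2))| := by
        congr 1; field_simp; ring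
    _ ≤ π * D / s * (C / s) / (π / 4) + 1 * (E / s ^ 2) / (π / 4)
        + 1 * (C / s) * (1 / s) / (π / 4 * (π / 2)) := by
        grw [abs_add_le, abs_add_le, h1, h2, h3]
    _ = (4 * D * C + 4 * E / π + 8 * C / π ^ 2) / s ^ 2 := by field_simp; ring

theorem eventually_abs_term_le {q : ℝ → ℝ} {h Q D : ℝ} {c c' : ℝ → ℝ → ℝ} {ρ α : ℕ → ℝ}
    (hq : ∀ t ∈ Icc 0 π, |q t| ≤ Q) (hc : ∀ r, IsCauchySolution q h r (c r) (c' r))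
    (hρ : ∀ᶠ n : ℕ in atTop, |ρ n - n| ≤ D / n)
    (hα : ∀ᶠ n : ℕ in atTop, |α n - π / 2| ≤ 1 / n) :
    ∃ B, ∀ᶠ n : ℕ in atTop, ∀ x ∈ Icc 0 π, ∀ t ∈ Icc 0 π,
      |cos (ρ n * x) * (c (ρ n) t - cos (ρ n * t)) / α n -
        cos (n * x) * (c n t - cos (n * t)) / (π / 2)| ≤ B / n ^ 2 := by
  have hQ : 0 ≤ Q := (abs_nonneg _).trans (hq 0 (left_mem_Icc.2 pi_pos.le))
  set C := |h| + π * Q * (2 + 2 * |h|)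
  have hC : 0 ≤ C := by positivity
  have hU : ∀ r, 1 ≤ r → 2 * π * Q ≤ r → ∀ t ∈ Icc 0 π, |c r t - cos (r * t)| ≤ C / r :=
    fun r hr1 hrQ t ht => by
      rw [le_div_iff₀ (by linarith), mul_comm]
      exact (hc r).mul_abs_sub_cos_le hq (fun s hs => (hc r).abs_le hq hr1 hrQ hs)
        (by linarith) ht
  set E := π * (Q * (2 * (2 * C) + π * D) + 3 * D * (2 * C))
  -- the bound of `abs_mul_div_sub_mul_div_le`, where `2 * C / n` bounds both remainders and `E` is
  -- the bound of `sq_mul_abs_sub_cos_sub_sub_cos_le`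
  refine ⟨4 * D * (2 * C) + 4 * E / π + 8 * (2 * C) / π ^ 2, ?_⟩
  -- from this threshold on, `|ρ n - n| ≤ 1` and both `ρ n` and `n` exceed `max 1 (2πQ)`
  filter_upwards [hρ, hα, tendsto_natCast_atTop_atTop.eventually_ge_atTop (2 + 4 * π * Q + |D|)]
    with n hρn hαn hn x hx t ht
  have hπQ : 0 ≤ π * Q := by positivity
  have hn2 : 2 + 4 * (π * Q) ≤ n := by linarith [abs_nonneg D]
  have hn0 : (0 : ℝ) < n := by linarith
  have hρ1 : |ρ n - n| ≤ 1 :=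
    hρn.trans ((div_le_one hn0).2 ((le_abs_self D).trans (by linarith)))
  obtain ⟨hlo, hhi⟩ := abs_le.1 hρ1
  have hUρ : ∀ t ∈ Icc 0 π, |c (ρ n) t - cos (ρ n * t)| ≤ 2 * C / n := fun t ht =>
    (hU _ (by linarith) (by linarith) t ht).trans
      (by rw [div_le_div_iff₀ (by linarith) hn0]; nlinarith)
  have hUn : ∀ t ∈ Icc 0 π, |c n t - cos (n * t)| ≤ 2 * C / n := fun t ht =>
    (hU _ (by linarith) (by linarith) t ht).trans (by gcongr; linarith)
  have hcos : |cos (ρ n * x) - cos (n * x)| ≤ π * D / n := by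
    grw [abs_cos_mul_sub_cos_mul_le, hρn, abs_of_nonneg hx.1, hx.2]
    · exact le_of_eq (by ring)
    · exact (abs_nonneg _).trans hρn
  exact abs_mul_div_sub_mul_div_le (by linarith) hcos (abs_cos_le_one _) (hUρ t ht)
    (hUn t ht) ((hc _).sq_mul_abs_sub_cos_sub_sub_cos_le (hc _) hq hn0 (by linarith)
      (by linarith) hρn hUρ hUn ht) hαn

theorem eventually_abs_le_one_of_summable_sq {k : ℕ → ℝ} (hk : Summable fun n => k n ^ 2) :
    ∀ᶠ n in atTop, |k n| ≤ 1 := by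
  filter_upwards [hk.tendsto_atTop_zero.eventually (ge_mem_nhds zero_lt_one)] with n hn
  exact (sq_le_one_iff_abs_le_one _).1 hn

theorem eventually_abs_sub_natCast_le {ρ k : ℕ → ℝ} {ω : ℝ} (hk : ∀ᶠ n in atTop, |k n| ≤ 1)
    (hρ : ∀ n : ℕ, 1 ≤ n → ρ n = n + ω / (π * n) + k n / n) :
    ∀ᶠ n : ℕ in atTop, |ρ n - n| ≤ (|ω| / π + 1) / n := by
  filter_upwards [hk, eventually_ge_atTop 1] with n hkn hn
  have hn0 : (0 : ℝ) < n := by exact_mod_cast hn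
  calc |ρ n - n| = |ω / π + k n| / n := by
        rw [hρ n hn, ← abs_of_pos hn0, ← abs_div, abs_of_pos hn0]; congr 1; field_simp; ring
    _ ≤ (|ω| / π + 1) / n := by grw [abs_add_le, abs_div, abs_of_pos pi_pos, hkn]

theorem eventually_abs_sub_pi_div_two_le {α K : ℕ → ℝ} (hK : ∀ᶠ n in atTop, |K n| ≤ 1)
    (hα : ∀ n : ℕ, 1 ≤ n → α n = π / 2 + K n / n) :
    ∀ᶠ n : ℕ in atTop, |α n - π / 2| ≤ 1 / n := by
  filter_upwards [hK, eventually_ge_atTop 1] with n hKn hn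
  rw [hα n hn, add_sub_cancel_left, abs_div, Nat.abs_cast]
  gcongr

theorem summable_biSup_abs_of_eventually_le {f : ℕ → ℝ → ℝ → ℝ} {u : ℕ → ℝ} {S T : Set ℝ}
    (hS : S.Nonempty) (hT : T.Nonempty) (hu : Summable u)
    (hf : ∀ᶠ n in atTop, ∀ x ∈ S, ∀ t ∈ T, |f n x t| ≤ u n) :
    Summable fun n => ⨆ x ∈ S, ⨆ t ∈ T, |f n x t| := by
  refine hu.of_norm_bounded_eventually_nat ?_
  filter_upwards [hf] with n hn
  have hu0 : 0 ≤ u n := (abs_nonneg _).trans (hn _ hS.some_mem _ hT.some_mem)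
  rw [Real.norm_of_nonneg (Real.iSup_nonneg fun x => Real.iSup_nonneg fun _ =>
    Real.iSup_nonneg fun t => Real.iSup_nonneg fun _ => abs_nonneg _)]
  exact Real.iSup_le (fun x => Real.iSup_le (fun hx => Real.iSup_le (fun t =>
    Real.iSup_le (fun ht => hn x hx t ht) hu0) hu0) hu0) hu0

theorem stmt_12_general (q : ℝ → ℝ) (hq : ContinuousOn q (Set.Icc 0 π)) (h : ℝ)
    (c c' : ℝ → ℝ → ℝ)
    (hc_init : ∀ ρ' : ℝ, c ρ' 0 = 1 ∧ c' ρ' 0 = h)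
    (hc_deriv : ∀ ρ' : ℝ, ∀ x ∈ Set.Icc (0:ℝ) π,
      HasDerivWithinAt (c ρ') (c' ρ' x) (Set.Icc 0 π) x)
    (hc_deriv2 : ∀ ρ' : ℝ, ∀ x ∈ Set.Icc (0:ℝ) π,
      HasDerivWithinAt (c' ρ') (q x * c ρ' x - ρ' ^ 2 * c ρ' x) (Set.Icc 0 π) x)
    (ω : ℝ) (ρ α : ℕ → ℝ)
    (k K : ℕ → ℝ) (hk : Summable (fun n => (k n) ^ 2)) (hK : Summable (fun n => (K n) ^ 2))
    (hρa : ∀ n : ℕ, 1 ≤ n → ρ n = n + ω / (π * n) + k n / n)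
    (hαa : ∀ n : ℕ, 1 ≤ n → α n = π / 2 + K n / n)
    (α₀ : ℕ → ℝ) (hα₀ : ∀ n : ℕ, 1 ≤ n → α₀ n = π / 2) :
    Summable (fun n : ℕ => ⨆ x ∈ Set.Icc (0:ℝ) π, ⨆ t ∈ Set.Icc (0:ℝ) π,
      |cos (ρ n * x) * (c (ρ n) t - cos (ρ n * t)) / α n -
        cos (n * x) * (c n t - cos (n * t)) / α₀ n|) ∧
    (∀ n : ℕ, ContinuousOn
      (fun p : ℝ × ℝ =>
        cos (ρ n * p.1) * (c (ρ n) p.2 - cos (ρ n * p.2)) / α n -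
          cos (n * p.1) * (c n p.2 - cos (n * p.2)) / α₀ n)
      (Set.Icc (0:ℝ) π ×ˢ Set.Icc (0:ℝ) π)) ∧
    TendstoUniformlyOn
      (fun (N : ℕ) (p : ℝ × ℝ) => ∑ n ∈ Finset.range (N + 1),
        (cos (ρ n * p.1) * (c (ρ n) p.2 - cos (ρ n * p.2)) / α n -
          cos (n * p.1) * (c n p.2 - cos (n * p.2)) / α₀ n))
      (fun p : ℝ × ℝ => ∑' n : ℕ,
        (cos (ρ n * p.1) * (c (ρ n) p.2 - cos (ρ n * p.2)) / α n -
          cos (n * p.1) * (c n p.2 - cos (n * p.2)) / α₀ n))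
      atTop (Set.Icc (0:ℝ) π ×ˢ Set.Icc (0:ℝ) π) := by
  have hsol : ∀ r, IsCauchySolution q h r (c r) (c' r) := fun r =>
    ⟨(hc_init r).1, (hc_init r).2, hc_deriv r, hc_deriv2 r⟩
  obtain ⟨Q, hQ⟩ := isCompact_Icc.exists_bound_of_continuousOn hq
  obtain ⟨B, hB⟩ := eventually_abs_term_le hQ hsol
    (eventually_abs_sub_natCast_le (eventually_abs_le_one_of_summable_sq hk) hρa)
    (eventually_abs_sub_pi_div_two_le (eventually_abs_le_one_of_summable_sq hK) hαa)
  have hbound : ∀ᶠ n : ℕ in atTop, ∀ p ∈ Icc 0 π ×ˢ Icc 0 π,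
      ‖cos (ρ n * p.1) * (c (ρ n) p.2 - cos (ρ n * p.2)) / α n -
        cos (n * p.1) * (c n p.2 - cos (n * p.2)) / α₀ n‖ ≤ B / n ^ 2 := by
    filter_upwards [hB, eventually_ge_atTop 1] with n hn hn1 p hp
    rw [hα₀ n hn1]
    exact hn p.1 hp.1 p.2 hp.2
  have hsum : Summable fun n : ℕ => B / (n : ℝ) ^ 2 :=
    (Real.summable_one_div_nat_pow.2 one_lt_two).mul_left B |>.congr fun n => by ring
  refine ⟨summable_biSup_abs_of_eventually_le (nonempty_Icc.2 pi_pos.le)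
    (nonempty_Icc.2 pi_pos.le) hsum ?_, fun n => ?_, fun v hv => ?_⟩
  · filter_upwards [hbound] with n hn x hx t ht using hn (x, t) ⟨hx, ht⟩
  · exact ((hsol _).continuousOn_cos_mul_mul_sub_cos.div_const _).sub
      ((hsol _).continuousOn_cos_mul_mul_sub_cos.div_const _)
  · exact (tendsto_add_atTop_nat 1).eventually
      (tendstoUniformlyOn_tsum_nat_eventually hsum hbound v hv)

/-- The series Σ_{n=0}^∞ sup_{x,t∈[0,π]} |Δ_n(x,t)| converges, where
Δ_n(x,t) = cos(ρ_n x)(c(ρ_n,t) − cos(ρ_n t))/α_n − cos(nx)(c(n,t) − cos(nt))/α_n^0;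
i.e., the Δ_n form an absolutely and uniformly convergent series of continuous
functions on [0,π]². -/
theorem stmt_12 (q : ℝ → ℝ) (hq : ContinuousOn q (Set.Icc 0 π)) (h : ℝ)
    (c c' : ℝ → ℝ → ℝ)
    (hc_init : ∀ ρ' : ℝ, c ρ' 0 = 1 ∧ c' ρ' 0 = h)
    (hc_deriv : ∀ ρ' : ℝ, ∀ x ∈ Set.Icc (0:ℝ) π,
      HasDerivWithinAt (c ρ') (c' ρ' x) (Set.Icc 0 π) x)
    (hc_deriv2 : ∀ ρ' : ℝ, ∀ x ∈ Set.Icc (0:ℝ) π,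
      HasDerivWithinAt (c' ρ') (q x * c ρ' x - ρ' ^ 2 * c ρ' x) (Set.Icc 0 π) x)
    (ω : ℝ) (ρ α : ℕ → ℝ) (hρ : ∀ n, 0 < ρ n) (hα : ∀ n, 0 < α n)
    (k K : ℕ → ℝ) (hk : Summable (fun n => (k n) ^ 2)) (hK : Summable (fun n => (K n) ^ 2))
    (hρa : ∀ n : ℕ, 1 ≤ n → ρ n = n + ω / (π * n) + k n / n)
    (hαa : ∀ n : ℕ, 1 ≤ n → α n = π / 2 + K n / n)
    (α₀ : ℕ → ℝ) (hα₀0 : α₀ 0 = π) (hα₀ : ∀ n : ℕ, 1 ≤ n → α₀ n = π / 2) :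
    Summable (fun n : ℕ => ⨆ x ∈ Set.Icc (0:ℝ) π, ⨆ t ∈ Set.Icc (0:ℝ) π,
      |cos (ρ n * x) * (c (ρ n) t - cos (ρ n * t)) / α n -
        cos (n * x) * (c n t - cos (n * t)) / α₀ n|) ∧
    (∀ n : ℕ, ContinuousOn
      (fun p : ℝ × ℝ =>
        cos (ρ n * p.1) * (c (ρ n) p.2 - cos (ρ n * p.2)) / α n -
          cos (n * p.1) * (c n p.2 - cos (n * p.2)) / α₀ n)
      (Set.Icc (0:ℝ) π ×ˢ Set.Icc (0:ℝ) π)) ∧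
    TendstoUniformlyOn
      (fun (N : ℕ) (p : ℝ × ℝ) => ∑ n ∈ Finset.range (N + 1),
        (cos (ρ n * p.1) * (c (ρ n) p.2 - cos (ρ n * p.2)) / α n -
          cos (n * p.1) * (c n p.2 - cos (n * p.2)) / α₀ n))
      (fun p : ℝ × ℝ => ∑' n : ℕ,
        (cos (ρ n * p.1) * (c (ρ n) p.2 - cos (ρ n * p.2)) / α n -
          cos (n * p.1) * (c n p.2 - cos (n * p.2)) / α₀ n))
      atTop (Set.Icc (0:ℝ) π ×ˢ Set.Icc (0:ℝ) π) :=
  stmt_12_general q hq h c c' hc_init hc_deriv hc_deriv2 ω ρ α k K hk hK hρa hαa α₀ hα₀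
end

section
/- Let g(x,t) = (x/2) Σ_{k=0}^∞ ((x² − t²)/4)^k / (k!·(k+1)!) for 0 ≤ t ≤ x (this equals x·I₁(√(x²−t²))/√(x²−t²), where I₁ is the modified Bessel function of the first kind, and g(x,x) = x/2). Then for every x ≥ 0: (i) for every real ρ with |ρ| ≥ 1, cos( √(ρ² − 1)·x ) = cos(ρx) + ∫_0^x g(x,s) cos(ρs) ds; and (ii) cosh x = 1 + ∫_0^x g(x,s) ds. -/
/-!
Expand both the kernel and `cos (ρ * s)` in power series. Dominated convergence lets us
integrate the double series termwise, and the Beta-type integral `∫₀ˣ (x² - s²)^k s^(2m) ds`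
then gives `∫₀ˣ g(x,s) cos(ρs) ds = ∑_{n ≥ 1} ∑_{m < n} C(n,m) (-ρ²)^m x^(2n) / (2n)!`.
By the binomial theorem this is `∑ₙ ((1 - ρ²)^n - (-ρ²)^n) x^(2n) / (2n)!`, the Taylor series
of `cos (√(ρ² - 1) x)` (or of `cosh x` when `ρ = 0`) minus that of `cos (ρ x)`.
-/

open Real intervalIntegral Finset
open scoped Nat

theorem HasSum.sum_antidiagonal {α A : Type*} [AddCommMonoid α] [TopologicalSpace α]
    [ContinuousAdd α] [RegularSpace α] [AddMonoid A] [HasAntidiagonal A]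
    {f : A × A → α} {a : α} (h : HasSum f a) : HasSum (fun n => ∑ p ∈ antidiagonal n, f p) a := by
  refine (HasAntidiagonal.sigmaAntidiagonalEquivProd.hasSum_iff.2 h).sigma fun n => ?_
  rw [← sum_coe_sort]
  exact hasSum_fintype _

theorem sum_range_choose_mul_pow {R : Type*} [CommRing R] (a : R) (n : ℕ) :
    ∑ m ∈ range n, (n.choose m : R) * a ^ m = (1 + a) ^ n - a ^ n := by
  rw [add_comm, add_pow, sum_range_succ, Nat.choose_self]
  simp only [one_pow, mul_one, Nat.cast_one, eq_sub_iff_add_eq, mul_comm]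

theorem summable_pow_div_factorial_mul_factorial_succ (c : ℝ) :
    Summable fun k : ℕ => c ^ k / (k ! * (k + 1)! : ℝ) := by
  refine (summable_pow_div_factorial |c|).of_norm_bounded fun k => ?_
  rw [norm_div, norm_pow, Real.norm_eq_abs, Real.norm_of_nonneg (by positivity)]
  gcongr
  exact le_mul_of_one_le_right (by positivity) (by exact_mod_cast (k + 1).factorial_pos)

theorem abs_le_abs_of_mem_uIoc {s x : ℝ} (hs : s ∈ Set.uIoc 0 x) : |s| ≤ |x| := by
  rcases Set.mem_uIoc.1 hs with ⟨h0, h1⟩ | ⟨h0, h1⟩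
  · exact abs_le_abs h1 (by linarith)
  · rw [abs_of_nonpos h1, abs_of_neg (h0.trans_le h1)]
    linarith

theorem integral_sub_sq_pow_mul_pow (x : ℝ) (k m : ℕ) :
    ∫ s in (0:ℝ)..x, (x ^ 2 - s ^ 2) ^ k / (4 ^ k * k !) * (s ^ (2 * m) / (2 * m)!) =
      (m + k)! / m ! * (x ^ (2 * (m + k) + 1) / (2 * (m + k) + 1)!) := by
  induction k generalizing m with
  | zero =>
    have hm : (m ! : ℝ) ≠ 0 := by positivity
    simp only [pow_zero, Nat.factorial_zero, Nat.cast_one, mul_one, div_one, one_mul, add_zero,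
      integral_div, integral_pow, div_self hm]
    rw [Nat.factorial_succ]
    push_cast
    field_simp
    simp
  | succ k ih =>
    -- by parts, the integral at `(k + 1, m)` is `m + 1` times the one at `(k, m + 1)`
    have hu : ∀ s ∈ Set.uIcc (0:ℝ) x, HasDerivAt
        (fun s => (x ^ 2 - s ^ 2) ^ (k + 1) / (4 ^ (k + 1) * (k + 1)!))
        (-(s / 2) * ((x ^ 2 - s ^ 2) ^ k / (4 ^ k * k !))) s := by
      intro s _
      refine ((((hasDerivAt_pow 2 s).const_sub (x ^ 2)).fun_pow (k + 1)).div_const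
        ((4:ℝ) ^ (k + 1) * (k + 1)!)).congr_deriv ?_
      push_cast [Nat.factorial_succ]
      field_simp
      ring
    have hv : ∀ s ∈ Set.uIcc (0:ℝ) x, HasDerivAt (fun s : ℝ => s ^ (2 * m + 1) / (2 * m + 1)!)
        (s ^ (2 * m) / (2 * m)!) s := by
      intro s _
      refine ((hasDerivAt_pow (2 * m + 1) s).div_const ((2 * m + 1)! : ℝ)).congr_deriv ?_
      push_cast [Nat.factorial_succ]
      field_simp
    have hpt : ∀ s : ℝ, -(s / 2) * ((x ^ 2 - s ^ 2) ^ k / (4 ^ k * k !)) *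
        (s ^ (2 * m + 1) / (2 * m + 1)!) = -((m + 1) *
          ((x ^ 2 - s ^ 2) ^ k / (4 ^ k * k !) * (s ^ (2 * (m + 1)) / (2 * (m + 1))!))) := by
      intro s
      rw [show 2 * (m + 1) = 2 * m + 1 + 1 by ring, Nat.factorial_succ (2 * m + 1)]
      push_cast
      field_simp
      ring
    rw [integral_mul_deriv_eq_deriv_mul hu hv
      ((by fun_prop : Continuous _).intervalIntegrable _ _)
      ((by fun_prop : Continuous _).intervalIntegrable _ _)]
    simp only [sub_self, zero_pow (Nat.succ_ne_zero _), zero_div, zero_mul, mul_zero, zero_sub,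
      hpt, intervalIntegral.integral_neg, neg_neg, intervalIntegral.integral_const_mul, ih]
    rw [show m + 1 + k = m + (k + 1) by ring, Nat.factorial_succ m]
    push_cast
    field_simp

noncomputable def transmutationKernel (x t : ℝ) : ℝ :=
  x / 2 * ∑' k : ℕ, ((x ^ 2 - t ^ 2) / 4) ^ k / ((k ! : ℝ) * ((k + 1)! : ℝ))

noncomputable def kernelCosTerm (x ρ s : ℝ) (p : ℕ × ℕ) : ℝ :=
  (-1) ^ p.1 * (ρ * s) ^ (2 * p.1) / (2 * p.1)! *
    (x / 2 * (((x ^ 2 - s ^ 2) / 4) ^ p.2 / (p.2 ! * (p.2 + 1)! : ℝ)))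

theorem hasSum_kernelCosTerm (x ρ s : ℝ) :
    HasSum (kernelCosTerm x ρ s) (transmutationKernel x s * cos (ρ * s)) := by
  have hcos := hasSum_cos (ρ * s)
  have hker := ((summable_pow_div_factorial_mul_factorial_succ ((x ^ 2 - s ^ 2) / 4)).mul_left
    (x / 2)).hasSum
  rw [mul_comm, transmutationKernel, ← tsum_mul_left]
  have hcos_norm : Summable fun m : ℕ => ‖(-1) ^ m * (ρ * s) ^ (2 * m) / ((2 * m)! : ℝ)‖ :=
    hcos.summable.norm
  exact (hcos.mul hker (summable_mul_of_summable_norm hcos_norm hker.summable.norm) :)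

theorem norm_kernelCosTerm_le {x ρ s : ℝ} (hs : |s| ≤ |x|) (p : ℕ × ℕ) :
    ‖kernelCosTerm x ρ s p‖ ≤ |ρ * x| ^ (2 * p.1) / (2 * p.1)! *
      (|x| / 2 * ((x ^ 2 / 4) ^ p.2 / (p.2 ! * (p.2 + 1)! : ℝ))) := by
  have hsx : 0 ≤ x ^ 2 - s ^ 2 := sub_nonneg.2 (sq_le_sq.2 hs)
  simp only [kernelCosTerm, norm_mul, norm_div, norm_pow, norm_neg, norm_one, one_pow, one_mul,
    Real.norm_eq_abs, Nat.abs_cast, abs_two, abs_of_nonneg hsx, abs_mul,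
    abs_of_pos (show (0:ℝ) < 4 by norm_num)]
  gcongr
  exact sub_le_self _ (sq_nonneg s)

theorem hasSum_integral_kernelCosTerm (x ρ : ℝ) :
    HasSum (fun p => ∫ s in (0:ℝ)..x, kernelCosTerm x ρ s p)
      (∫ s in (0:ℝ)..x, transmutationKernel x s * cos (ρ * s)) := by
  have hbound : Summable fun p : ℕ × ℕ => |ρ * x| ^ (2 * p.1) / (2 * p.1)! *
      (|x| / 2 * ((x ^ 2 / 4) ^ p.2 / (p.2 ! * (p.2 + 1)! : ℝ))) :=
    (hasSum_cosh |ρ * x|).summable.mul_of_nonneg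
      ((summable_pow_div_factorial_mul_factorial_succ _).mul_left _)
      (fun _ => by positivity) (fun _ => by positivity)
  refine intervalIntegral.hasSum_integral_of_dominated_convergence _
    (fun p => (by unfold kernelCosTerm; fun_prop : Continuous _).aestronglyMeasurable)
    (fun p => .of_forall fun s hs => norm_kernelCosTerm_le (abs_le_abs_of_mem_uIoc hs) p)
    (.of_forall fun _ _ => hbound) intervalIntegrable_const
    (.of_forall fun s _ => hasSum_kernelCosTerm x ρ s)

theorem integral_kernelCosTerm (x ρ : ℝ) (m k : ℕ) :
    ∫ s in (0:ℝ)..x, kernelCosTerm x ρ s (m, k) =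
      (m + k + 1).choose m * (-ρ ^ 2) ^ m * (x ^ (2 * (m + k + 1)) / (2 * (m + k + 1))!) := by
  have hpt : ∀ s, kernelCosTerm x ρ s (m, k) = (-ρ ^ 2) ^ m * x / (2 * (k + 1)!) *
      ((x ^ 2 - s ^ 2) ^ k / (4 ^ k * k !) * (s ^ (2 * m) / (2 * m)!)) := by
    intro s
    simp only [kernelCosTerm]
    rw [neg_pow, mul_pow, pow_mul, pow_mul, div_pow]
    field_simp
    ring
  simp only [hpt, intervalIntegral.integral_const_mul, integral_sub_sq_pow_mul_pow]
  have hchoose : ((m + k + 1).choose m : ℝ) = (m + k + 1) * (m + k)! / (m ! * (k + 1)!) := by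
    rw [eq_div_iff (by positivity)]
    have h := Nat.add_choose_mul_factorial_mul_factorial (k + 1) m
    rw [show k + 1 + m = m + k + 1 by ring, Nat.factorial_succ (m + k)] at h
    exact_mod_cast (by rw [← h]; ring : (m + k + 1).choose m * (m ! * (k + 1)!) = _)
  rw [hchoose, show 2 * (m + k + 1) = 2 * (m + k) + 1 + 1 by ring,
    Nat.factorial_succ (2 * (m + k) + 1), pow_succ]
  push_cast
  field_simp
  ring

theorem HasSum.eq_cos_add_integral_transmutationKernel {ρ x c : ℝ}
    (h : HasSum (fun n : ℕ => (1 - ρ ^ 2) ^ n * (x ^ (2 * n) / (2 * n)!)) c) :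
    c = cos (ρ * x) + ∫ s in (0:ℝ)..x, transmutationKernel x s * cos (ρ * s) := by
  set f : ℕ → ℝ := fun n => ((1 - ρ ^ 2) ^ n - (-ρ ^ 2) ^ n) * (x ^ (2 * n) / (2 * n)!)
  have hf : HasSum f (c - cos (ρ * x)) := by
    refine (h.sub (hasSum_cos (ρ * x))).congr_fun fun n => ?_
    rw [neg_pow, mul_pow, pow_mul, pow_mul]
    ring
  have hf_succ : HasSum (fun N => f (N + 1))
      (∫ s in (0:ℝ)..x, transmutationKernel x s * cos (ρ * s)) := by
    refine (hasSum_integral_kernelCosTerm x ρ).sum_antidiagonal.congr_fun fun N => ?_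
    rw [Finset.Nat.sum_antidiagonal_eq_sum_range_succ
      (fun m k => ∫ s in (0:ℝ)..x, kernelCosTerm x ρ s (m, k))]
    have hN : ∀ m ∈ range N.succ, m + (N - m) + 1 = N + 1 := fun m hm => by
      rw [Nat.add_sub_cancel' (mem_range_succ_iff.1 hm)]
    rw [sum_congr rfl fun m hm => by rw [integral_kernelCosTerm, hN m hm], ← sum_mul,
      sum_range_choose_mul_pow, ← sub_eq_add_neg]
  have h0 := (hasSum_nat_add_iff' 1).2 hf
  simp only [range_one, sum_singleton, f, pow_zero, sub_self, zero_mul, sub_zero] at h0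
  linarith [hf_succ.unique h0]

/-- Let g(x,t) = (x/2) Σ_{k=0}^∞ ((x² − t²)/4)^k / (k!·(k+1)!)
(this equals x·I₁(√(x²−t²))/√(x²−t²), with g(x,x) = x/2).
Then for every x ≥ 0:
(i) for every real ρ with |ρ| ≥ 1,
    cos(√(ρ² − 1)·x) = cos(ρx) + ∫_0^x g(x,s) cos(ρs) ds; and
(ii) cosh x = 1 + ∫_0^x g(x,s) ds. -/
theorem stmt_13 (g : ℝ → ℝ → ℝ)
    (hg : ∀ x t : ℝ, g x t =
      x / 2 * ∑' k : ℕ, ((x ^ 2 - t ^ 2) / 4) ^ k /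
        ((Nat.factorial k : ℝ) * (Nat.factorial (k + 1) : ℝ))) :
    ∀ x : ℝ, 0 ≤ x →
      (∀ ρ : ℝ, 1 ≤ |ρ| →
        cos (Real.sqrt (ρ ^ 2 - 1) * x) =
          cos (ρ * x) + ∫ s in (0:ℝ)..x, g x s * cos (ρ * s)) ∧
      Real.cosh x = 1 + ∫ s in (0:ℝ)..x, g x s := by
  obtain rfl : g = transmutationKernel := funext₂ hg
  intro x _
  refine ⟨fun ρ hρ => ?_, ?_⟩
  · have hρ2 : 0 ≤ ρ ^ 2 - 1 := sub_nonneg.2 (one_le_sq_iff_one_le_abs ρ |>.2 hρ)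
    refine HasSum.eq_cos_add_integral_transmutationKernel ((hasSum_cos _).congr_fun fun n => ?_)
    rw [mul_pow, pow_mul, pow_mul, sq_sqrt hρ2, ← mul_assoc, ← mul_pow]
    ring
  · have h := HasSum.eq_cos_add_integral_transmutationKernel (ρ := 0) (x := x)
      ((hasSum_cosh x).congr_fun fun n => by simp)
    simpa using h
end
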